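/- If V_alpha < V_dagger < 0, C > 0, and g > 0 together satisfy the dispersion relation C²(1 − 2V_alpha) = s₀ I'_{C²}(s₀)/I_{C²}(s₀) with s₀ = 2C√g (1 − V_dagger/V_alpha)^{1/(2C²)}, then g ≥ H_lwr(C, V_alpha) = V_alpha(V_alpha − 1) C² (−V_alpha/(V_dagger − V_alpha))^{1/C²}. -/

import Mathlib

/-- Modified Bessel function of the first kind of real order `ν`,
defined via its power series. -/
noncomputable def besselI (ν x : ℝ) : ℝ :=
  ∑' k : ℕ, (x / 2) ^ (2 * (k : ℝ) + ν) / ((k.factorial : ℝ) * Real.Gamma ((k : ℝ) + ν + 1))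

/-!
With `a_k = (x/2)^(2k+ν) / (k! Γ(k+ν+1))` we have `I_ν(x) = ∑ a_k` and `x I_ν'(x) = ∑ (2k+ν) a_k`,
while `a_(k+1) / a_k = x² / (4(k+1)(k+1+ν))` gives `∑ (2k+ν)² a_k = (ν² + x²) ∑ a_k`
(Bessel's equation in series form). Cauchy–Schwarz with weights `a_k` then yields
`x I_ν'(x) / I_ν(x) ≤ √(ν² + x²)`. For `ν = C²` and `x = s₀` the dispersion relation therefore
forces `C⁴ (1 - 2Vα)² ≤ C⁴ + s₀²`, i.e. `4 C⁴ Vα(Vα - 1) ≤ s₀² = 4 C² g (1 - V†/Vα)^(1/C²)`,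
and `(1 - V†/Vα)⁻¹ = -Vα/(V† - Vα)`.
-/

open Real

theorem tsum_sqrt_mul_sqrt_le {ι : Type*} {f g : ι → ℝ} (hf : ∀ i, 0 ≤ f i) (hg : ∀ i, 0 ≤ g i)
    (hf_sum : Summable f) (hg_sum : Summable g) :
    ∑' i, √(f i) * √(g i) ≤ √(∑' i, f i) * √(∑' i, g i) := by
  have hsq {h : ι → ℝ} (hh : ∀ i, 0 ≤ h i) : (fun i => √(h i) ^ (2 : ℝ)) = h := by
    funext i; rw [rpow_two, sq_sqrt (hh i)]
  have := inner_le_Lp_mul_Lq_tsum_of_nonneg HolderConjugate.two_two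
    (fun i => sqrt_nonneg (f i)) (fun i => sqrt_nonneg (g i))
    (by rwa [hsq hf]) (by rwa [hsq hg])
  rwa [hsq hf, hsq hg, ← sqrt_eq_rpow, ← sqrt_eq_rpow] at this

noncomputable def besselTerm (ν x : ℝ) (k : ℕ) : ℝ :=
  (x / 2) ^ (2 * (k : ℝ) + ν) / ((k.factorial : ℝ) * Gamma ((k : ℝ) + ν + 1))

theorem besselI_eq_tsum_besselTerm (ν x : ℝ) : besselI ν x = ∑' k, besselTerm ν x k := rfl

section BesselSeries

variable {ν x : ℝ}

theorem factorial_mul_Gamma_pos (hν : 0 ≤ ν) (k : ℕ) :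
    0 < (k.factorial : ℝ) * Gamma ((k : ℝ) + ν + 1) :=
  mul_pos (mod_cast k.factorial_pos) (Gamma_pos_of_pos (by positivity))

theorem besselTerm_pos (hν : 0 ≤ ν) (hx : 0 < x) (k : ℕ) : 0 < besselTerm ν x k :=
  div_pos (rpow_pos_of_pos (by positivity) _) (factorial_mul_Gamma_pos hν k)

theorem besselTerm_le_besselTerm {y : ℝ} (hν : 0 ≤ ν) (hx : 0 < x) (hxy : x ≤ y) (k : ℕ) :
    besselTerm ν x k ≤ besselTerm ν y k :=
  div_le_div_of_nonneg_right
    (rpow_le_rpow (by positivity) (by linarith) (by positivity))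
    (factorial_mul_Gamma_pos hν k).le

theorem besselTerm_succ (hν : 0 ≤ ν) (hx : 0 < x) (k : ℕ) :
    besselTerm ν x (k + 1) =
      besselTerm ν x k * (x ^ 2 / (4 * ((k : ℝ) + 1) * ((k : ℝ) + 1 + ν))) := by
  have hGamma : Gamma ((k : ℝ) + 1 + ν + 1) = ((k : ℝ) + ν + 1) * Gamma ((k : ℝ) + ν + 1) := by
    rw [show (k : ℝ) + 1 + ν + 1 = (k : ℝ) + ν + 1 + 1 by ring, Gamma_add_one (by positivity)]
  have hpow : (x / 2) ^ (2 * ((k : ℝ) + 1) + ν) = (x / 2) ^ (2 * (k : ℝ) + ν) * (x / 2) ^ 2 := by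
    rw [show 2 * ((k : ℝ) + 1) + ν = (2 * (k : ℝ) + ν) + (2 : ℕ) by push_cast; ring,
      rpow_add (by positivity), rpow_natCast]
  have hc := factorial_mul_Gamma_pos hν k
  simp only [besselTerm, Nat.factorial_succ, Nat.cast_mul, Nat.cast_add, Nat.cast_one,
    hGamma, hpow]
  field_simp
  ring

/-- The weight `(2k + ν + 1)²` dominates `1`, `2k + ν` and `(2k + ν)²` at once. -/
theorem summable_succ_sq_mul_besselTerm (hν : 0 ≤ ν) (hx : 0 < x) :
    Summable fun k : ℕ => (2 * (k : ℝ) + ν + 1) ^ 2 * besselTerm ν x k := by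
  refine summable_of_ratio_norm_eventually_le (r := 1 / 2) (by norm_num) ?_
  filter_upwards [Filter.eventually_ge_atTop ⌈3 * x⌉₊] with k hk
  have hk' : 3 * x ≤ k := Nat.ceil_le.mp hk
  have ha := besselTerm_pos hν hx k
  have ha' := besselTerm_pos hν hx (k + 1)
  rw [norm_of_nonneg (by positivity), norm_of_nonneg (by positivity), besselTerm_succ hν hx k]
  push_cast
  have hweight : (2 * ((k : ℝ) + 1) + ν + 1) ^ 2 ≤ 9 * (2 * (k : ℝ) + ν + 1) ^ 2 := by
    nlinarith
  have hratio : x ^ 2 / (4 * ((k : ℝ) + 1) * ((k : ℝ) + 1 + ν)) ≤ 1 / 18 := by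
    rw [div_le_iff₀ (by positivity)]
    nlinarith
  calc (2 * ((k : ℝ) + 1) + ν + 1) ^ 2 *
        (besselTerm ν x k * (x ^ 2 / (4 * ((k : ℝ) + 1) * ((k : ℝ) + 1 + ν))))
      ≤ 9 * (2 * (k : ℝ) + ν + 1) ^ 2 * (besselTerm ν x k * (1 / 18)) := by gcongr
    _ = 1 / 2 * ((2 * (k : ℝ) + ν + 1) ^ 2 * besselTerm ν x k) := by ring

theorem summable_of_le_succ_sq_mul_besselTerm {w : ℕ → ℝ} (hν : 0 ≤ ν) (hx : 0 < x)
    (hw : ∀ k : ℕ, 0 ≤ w k ∧ w k ≤ (2 * (k : ℝ) + ν + 1) ^ 2) :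
    Summable fun k => w k * besselTerm ν x k :=
  (summable_succ_sq_mul_besselTerm hν hx).of_nonneg_of_le
    (fun k => mul_nonneg (hw k).1 (besselTerm_pos hν hx k).le)
    (fun k => mul_le_mul_of_nonneg_right (hw k).2 (besselTerm_pos hν hx k).le)

theorem summable_besselTerm (hν : 0 ≤ ν) (hx : 0 < x) : Summable (besselTerm ν x) := by
  simpa using summable_of_le_succ_sq_mul_besselTerm (w := fun _ => 1) hν hx
    (fun k => ⟨zero_le_one, by nlinarith [k.cast_nonneg (α := ℝ)]⟩)

theorem summable_mul_besselTerm (hν : 0 ≤ ν) (hx : 0 < x) :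
    Summable fun k : ℕ => (2 * (k : ℝ) + ν) * besselTerm ν x k :=
  summable_of_le_succ_sq_mul_besselTerm hν hx
    (fun k => ⟨by positivity, by nlinarith [k.cast_nonneg (α := ℝ)]⟩)

theorem summable_sq_mul_besselTerm (hν : 0 ≤ ν) (hx : 0 < x) :
    Summable fun k : ℕ => (2 * (k : ℝ) + ν) ^ 2 * besselTerm ν x k :=
  summable_of_le_succ_sq_mul_besselTerm hν hx
    (fun k => ⟨by positivity, by nlinarith [k.cast_nonneg (α := ℝ)]⟩)

theorem tsum_sq_mul_besselTerm (hν : 0 ≤ ν) (hx : 0 < x) :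
    ∑' k : ℕ, (2 * (k : ℝ) + ν) ^ 2 * besselTerm ν x k = (ν ^ 2 + x ^ 2) * besselI ν x := by
  have hsum := summable_besselTerm hν hx
  have hdiff : Summable fun k : ℕ => ((2 * (k : ℝ) + ν) ^ 2 - ν ^ 2) * besselTerm ν x k := by
    simpa only [sub_mul] using (summable_sq_mul_besselTerm hν hx).sub (hsum.mul_left (ν ^ 2))
  -- `(2k + 2 + ν)² - ν² = 4 (k + 1) (k + 1 + ν)` cancels the ratio of consecutive terms.
  have hshift : ∀ k : ℕ, ((2 * ((k + 1 : ℕ) : ℝ) + ν) ^ 2 - ν ^ 2) * besselTerm ν x (k + 1) =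
      x ^ 2 * besselTerm ν x k := by
    intro k
    rw [besselTerm_succ hν hx k]
    push_cast
    field_simp
    ring
  have hdiff_tsum : ∑' k : ℕ, ((2 * (k : ℝ) + ν) ^ 2 - ν ^ 2) * besselTerm ν x k =
      x ^ 2 * besselI ν x := by
    rw [hdiff.tsum_eq_zero_add]
    simp only [hshift, tsum_mul_left, besselI_eq_tsum_besselTerm]
    simp
  calc ∑' k : ℕ, (2 * (k : ℝ) + ν) ^ 2 * besselTerm ν x k
      = ∑' k : ℕ, (((2 * (k : ℝ) + ν) ^ 2 - ν ^ 2) * besselTerm ν x k +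
          ν ^ 2 * besselTerm ν x k) := by simp only [sub_mul, sub_add_cancel]
    _ = (ν ^ 2 + x ^ 2) * besselI ν x := by
      rw [hdiff.tsum_add (hsum.mul_left _), hdiff_tsum, tsum_mul_left,
        ← besselI_eq_tsum_besselTerm]
      ring

theorem hasDerivAt_besselTerm (hx : 0 < x) (k : ℕ) :
    HasDerivAt (fun y => besselTerm ν y k) ((2 * (k : ℝ) + ν) * besselTerm ν x k / x) x := by
  have hhalf : HasDerivAt (fun y : ℝ => y / 2) (1 / 2) x := (hasDerivAt_id x).div_const 2
  refine ((hhalf.rpow_const (p := 2 * (k : ℝ) + ν) (Or.inl (by positivity))).div_const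
    ((k.factorial : ℝ) * Gamma ((k : ℝ) + ν + 1))).congr_deriv ?_
  unfold besselTerm
  rw [rpow_sub_one (by positivity)]
  field_simp

theorem hasDerivAt_besselI (hν : 0 ≤ ν) (hx : 0 < x) :
    HasDerivAt (besselI ν) (∑' k : ℕ, (2 * (k : ℝ) + ν) * besselTerm ν x k / x) x := by
  have hmem : x ∈ Set.Ioo (x / 2) (2 * x) := ⟨by linarith, by linarith⟩
  have hbound : ∀ (k : ℕ), ∀ y ∈ Set.Ioo (x / 2) (2 * x),
      ‖(2 * (k : ℝ) + ν) * besselTerm ν y k / y‖ ≤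
        2 / x * ((2 * (k : ℝ) + ν) * besselTerm ν (2 * x) k) := by
    rintro k y ⟨hy, hy'⟩
    have hy0 : 0 < y := by linarith
    have hterm := besselTerm_le_besselTerm hν hy0 hy'.le k
    have hpos_y := besselTerm_pos hν hy0 k
    have hpos_2x := besselTerm_pos hν (by linarith : 0 < 2 * x) k
    rw [norm_of_nonneg (by positivity)]
    calc (2 * (k : ℝ) + ν) * besselTerm ν y k / y
        ≤ (2 * (k : ℝ) + ν) * besselTerm ν (2 * x) k / (x / 2) := by gcongr
      _ = 2 / x * ((2 * (k : ℝ) + ν) * besselTerm ν (2 * x) k) := by field_simp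
  exact hasDerivAt_tsum_of_isPreconnected (g := fun k y => besselTerm ν y k)
    (g' := fun k y => (2 * (k : ℝ) + ν) * besselTerm ν y k / y)
    ((summable_mul_besselTerm hν (by linarith)).mul_left _)
    isOpen_Ioo isPreconnected_Ioo (fun k y hy => hasDerivAt_besselTerm (by linarith [hy.1]) k)
    hbound hmem (summable_besselTerm hν hx) hmem

theorem mul_deriv_besselI (hν : 0 ≤ ν) (hx : 0 < x) :
    x * deriv (besselI ν) x = ∑' k : ℕ, (2 * (k : ℝ) + ν) * besselTerm ν x k := by
  rw [(hasDerivAt_besselI hν hx).deriv, tsum_div_const, mul_div_cancel₀ _ hx.ne']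

theorem besselI_pos (hν : 0 ≤ ν) (hx : 0 < x) : 0 < besselI ν x :=
  (summable_besselTerm hν hx).tsum_pos (fun k => (besselTerm_pos hν hx k).le) 0
    (besselTerm_pos hν hx 0)

theorem mul_deriv_besselI_div_besselI_le (hν : 0 ≤ ν) (hx : 0 < x) :
    x * deriv (besselI ν) x / besselI ν x ≤ √(ν ^ 2 + x ^ 2) := by
  have hpos := besselTerm_pos hν hx
  rw [div_le_iff₀ (besselI_pos hν hx), mul_deriv_besselI hν hx]
  calc ∑' k : ℕ, (2 * (k : ℝ) + ν) * besselTerm ν x k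
      = ∑' k : ℕ, √(besselTerm ν x k) * √((2 * (k : ℝ) + ν) ^ 2 * besselTerm ν x k) := by
        refine tsum_congr fun k => ?_
        rw [sqrt_mul' _ (hpos k).le, sqrt_sq (by positivity), mul_left_comm,
          mul_self_sqrt (hpos k).le]
    _ ≤ √(∑' k : ℕ, besselTerm ν x k) *
          √(∑' k : ℕ, (2 * (k : ℝ) + ν) ^ 2 * besselTerm ν x k) :=
        tsum_sqrt_mul_sqrt_le (fun k => (hpos k).le) (fun k => by have := hpos k; positivity)
          (summable_besselTerm hν hx) (summable_sq_mul_besselTerm hν hx)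
    _ = √(ν ^ 2 + x ^ 2) * besselI ν x := by
      rw [tsum_sq_mul_besselTerm hν hx, ← besselI_eq_tsum_besselTerm,
        sqrt_mul (by positivity), mul_left_comm, mul_self_sqrt (besselI_pos hν hx).le]

end BesselSeries

/-- If `Vα < V† < 0`, `C > 0` and `g > 0` satisfy the dispersion relation, then
`g ≥ H_lwr(C, Vα) = Vα(Vα − 1) C² (−Vα/(V† − Vα))^{1/C²}`. -/
theorem dispersion_relation_lower_bound
    (Vdag Valpha C g : ℝ) (hVd : Vdag < 0) (hVa : Valpha < Vdag)
    (hC : 0 < C) (hg : 0 < g)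
    (hdisp : C ^ 2 * (1 - 2 * Valpha) =
      (2 * C * Real.sqrt g * (1 - Vdag / Valpha) ^ (1 / (2 * C ^ 2))) *
        deriv (besselI (C ^ 2))
          (2 * C * Real.sqrt g * (1 - Vdag / Valpha) ^ (1 / (2 * C ^ 2))) /
        besselI (C ^ 2)
          (2 * C * Real.sqrt g * (1 - Vdag / Valpha) ^ (1 / (2 * C ^ 2)))) :
    g ≥ Valpha * (Valpha - 1) * C ^ 2 *
      (-Valpha / (Vdag - Valpha)) ^ (1 / C ^ 2) := by
  have hVα : Valpha < 0 := hVa.trans hVd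
  set B := 1 - Vdag / Valpha with hB_def
  have hB : 0 < B := by
    rw [hB_def, one_sub_div hVα.ne]
    exact div_pos_of_neg_of_neg (by linarith) hVα
  set s := 2 * C * √g * B ^ (1 / (2 * C ^ 2)) with hs_def
  have hs : 0 < s := by positivity
  have hbound : C ^ 2 * (1 - 2 * Valpha) ≤ √((C ^ 2) ^ 2 + s ^ 2) :=
    hdisp ▸ mul_deriv_besselI_div_besselI_le (by positivity) hs
  have hsq := (le_sqrt (by nlinarith) (by positivity)).mp hbound
  have hs_sq : s ^ 2 = 4 * C ^ 2 * (g * B ^ (1 / C ^ 2)) := by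
    have hpow : (B ^ (1 / (2 * C ^ 2))) ^ 2 = B ^ (1 / C ^ 2) := by
      rw [← rpow_mul_natCast hB.le]
      congr 1
      push_cast
      field_simp
    rw [hs_def, mul_pow, mul_pow, mul_pow, sq_sqrt hg.le, hpow]
    ring
  have hbase : (-Valpha / (Vdag - Valpha)) ^ (1 / C ^ 2) = (B ^ (1 / C ^ 2))⁻¹ := by
    rw [← inv_rpow hB.le, hB_def, one_sub_div hVα.ne, inv_div, ← neg_sub Valpha Vdag,
      neg_div_neg_eq]
  have hkey :
      4 * C ^ 2 * (Valpha * (Valpha - 1) * C ^ 2) ≤ 4 * C ^ 2 * (g * B ^ (1 / C ^ 2)) := by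
    rw [← hs_sq]
    nlinarith
  rw [ge_iff_le, hbase, ← div_eq_mul_inv, div_le_iff₀ (by positivity)]
  exact le_of_mul_le_mul_left hkey (by positivity)
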